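/- Let n ≥ 1. There exists a constant N > 0, depending only on n, such that for every Borel set K ⊆ ℝ^n × ℝ one has cap(K) ≥ N · |K|^{n/(n+2)}, where |K| is the (n+1)-dimensional Lebesgue measure of K. -/

import Mathlib

open MeasureTheory Real Set Metric Filter
open scoped ENNReal

noncomputable section

/-- The space ℝ^n × ℝ (spatial × time). -/
abbrev Spc (n : ℕ) := EuclideanSpace ℝ (Fin n) × ℝ

/-- Parabolic cylinder C_r(Y) = B_r(y) × (s - r², s). -/
def pCyl (n : ℕ) (Y : Spc n) (r : ℝ) : Set (Spc n) :=
  (Metric.ball Y.1 r) ×ˢ (Set.Ioo (Y.2 - r ^ 2) Y.2)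

/-- |C_r|: the measure of a parabolic cylinder of radius r. -/
def cylVol (n : ℕ) (r : ℝ) : ENNReal :=
  volume (pCyl n ((0 : EuclideanSpace ℝ (Fin n)), (0 : ℝ)) r)

/-- The parabolic boundary of an open set Q. -/
def pBoundary (n : ℕ) (Q : Set (Spc n)) : Set (Spc n) :=
  {X | X ∈ frontier Q ∧ ∃ δ > (0 : ℝ), ∃ γ : ℝ → EuclideanSpace ℝ (Fin n),
    ContinuousOn γ (Set.Ico X.2 (X.2 + δ)) ∧ γ X.2 = X.1 ∧
    ∀ t ∈ Set.Ioo X.2 (X.2 + δ), (γ t, t) ∈ Q}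

/-- Condition (A): exterior measure condition. -/
def condA (n : ℕ) (Q : Set (Spc n)) (θ₀ : ℝ) : Prop :=
  ∀ X ∈ pBoundary n Q, ∀ r > (0 : ℝ),
    ENNReal.ofReal θ₀ * cylVol n r < volume (pCyl n X r \ Q)

/-- Parabolic distance. -/
def pDist (n : ℕ) (X Y : Spc n) : ℝ := max ‖X.1 - Y.1‖ (Real.sqrt |X.2 - Y.2|)

/-- The fundamental solution of the heat equation. -/
def heatF (n : ℕ) (x : EuclideanSpace ℝ (Fin n)) (t : ℝ) : ℝ :=
  if 0 < t then (4 * π * t) ^ (-(n : ℝ) / 2) * Real.exp (-‖x‖ ^ 2 / (4 * t)) else 0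

/-- Heat ball E(X, r). -/
def heatBall (n : ℕ) (X : Spc n) (r : ℝ) : Set (Spc n) :=
  {Y | r ≤ heatF n (X.1 - Y.1) (X.2 - Y.2)}

/-- Thermal capacity of a set. -/
def thermalCap (n : ℕ) (K : Set (Spc n)) : ENNReal :=
  sSup {m : ENNReal | ∃ μ : Measure (Spc n), IsFiniteMeasure μ ∧ μ Kᶜ = 0 ∧
    (∀ X : Spc n, ∫⁻ Y, ENNReal.ofReal (heatF n (X.1 - Y.1) (X.2 - Y.2)) ∂μ ≤ 1) ∧
    m = μ Set.univ}

/-- Heat shell {Y : a ≤ F(Y₀ - Y) ≤ b}. -/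
def heatShell (n : ℕ) (Y₀ : Spc n) (a b : ℝ) : Set (Spc n) :=
  {Y | a ≤ heatF n (Y₀.1 - Y.1) (Y₀.2 - Y.2) ∧ heatF n (Y₀.1 - Y.1) (Y₀.2 - Y.2) ≤ b}

/-!
For every `T > 0` the heat potential of Lebesgue measure on `K` is at most
`T + (4πT)^{-n/2} |K|`: over the slab of time lags in `(0, T)` each time slice of the kernel
integrates to `1`, and at time lags `≥ T` the kernel is bounded by `(4πT)^{-n/2}`. Dividing
Lebesgue measure on `K` by this bound gives an admissible measure, and the choice
`T = |K|^{2/(n+2)}` yields `cap K ≥ |K|^{n/(n+2)} / (1 + (4π)^{-n/2})`. Sets of infinite measure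
are exhausted by subsets of finite measure.
-/

open scoped ENNReal

lemma heatF_of_nonpos (n : ℕ) (x : EuclideanSpace ℝ (Fin n)) {t : ℝ} (ht : t ≤ 0) :
    heatF n x t = 0 :=
  if_neg ht.not_gt

lemma heatF_eq_gaussian (n : ℕ) (x : EuclideanSpace ℝ (Fin n)) {t : ℝ} (ht : 0 < t) :
    heatF n x t = (4 * π * t) ^ (-(n : ℝ) / 2) * rexp (-(4 * t)⁻¹ * ‖x‖ ^ 2) := by
  rw [heatF, if_pos ht]
  congr 2
  ring

lemma heatF_le_of_le (n : ℕ) (x : EuclideanSpace ℝ (Fin n)) {T t : ℝ} (hT : 0 < T)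
    (hTt : T ≤ t) : heatF n x t ≤ (4 * π * T) ^ (-(n : ℝ) / 2) := by
  have ht : 0 < t := hT.trans_le hTt
  rw [heatF_eq_gaussian n x ht]
  calc (4 * π * t) ^ (-(n : ℝ) / 2) * rexp (-(4 * t)⁻¹ * ‖x‖ ^ 2)
      ≤ (4 * π * t) ^ (-(n : ℝ) / 2) := by
        refine mul_le_of_le_one_right (rpow_nonneg (by positivity) _) (exp_le_one_iff.2 ?_)
        have : 0 ≤ (4 * t)⁻¹ * ‖x‖ ^ 2 := by positivity
        linarith
    _ ≤ (4 * π * T) ^ (-(n : ℝ) / 2) :=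
        rpow_le_rpow_of_nonpos (mul_pos (by positivity) hT) (by gcongr)
          (div_nonpos_of_nonpos_of_nonneg (by simp) zero_le_two)

lemma measurable_heatF (n : ℕ) : Measurable fun p : Spc n => heatF n p.1 p.2 := by
  unfold heatF
  refine Measurable.ite (measurableSet_lt measurable_const measurable_snd) ?_ measurable_const
  exact ((measurable_const.mul measurable_snd).pow measurable_const).mul
    ((measurable_fst.norm.pow measurable_const).neg.div (measurable_const.mul measurable_snd)).exp

lemma lintegral_heatF (n : ℕ) {t : ℝ} (ht : 0 < t) :
    ∫⁻ x, ENNReal.ofReal (heatF n x t) = 1 := by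
  have hgauss : ∫ x : EuclideanSpace ℝ (Fin n), rexp (-(4 * t)⁻¹ * ‖x‖ ^ 2)
      = (4 * π * t) ^ ((n : ℝ) / 2) := by
    rw [GaussianFourier.integral_rexp_neg_mul_sq_norm (by positivity),
      finrank_euclideanSpace_fin, div_inv_eq_mul]
    ring_nf
  have hint : Integrable fun x : EuclideanSpace ℝ (Fin n) => rexp (-(4 * t)⁻¹ * ‖x‖ ^ 2) :=
    Integrable.of_integral_ne_zero (by rw [hgauss]; positivity)
  simp_rw [heatF_eq_gaussian n _ ht]
  rw [← ofReal_integral_eq_lintegral_ofReal (hint.const_mul _)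
    (ae_of_all _ fun x => by positivity), integral_const_mul, hgauss,
    ← rpow_add (by positivity), neg_div, neg_add_cancel, rpow_zero, ENNReal.ofReal_one]

lemma lintegral_heatF_sub (n : ℕ) (x : EuclideanSpace ℝ (Fin n)) {t : ℝ} (ht : 0 < t) :
    ∫⁻ y, ENNReal.ofReal (heatF n (x - y) t) = 1 := by
  rw [lintegral_sub_left_eq_self (fun y => ENNReal.ofReal (heatF n y t)) x, lintegral_heatF n ht]

def heatPotential (n : ℕ) (μ : Measure (Spc n)) (X : Spc n) : ℝ≥0∞ :=
  ∫⁻ Y, ENNReal.ofReal (heatF n (X.1 - Y.1) (X.2 - Y.2)) ∂μ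

lemma measurable_heatF_sub (n : ℕ) (X : Spc n) :
    Measurable fun Y : Spc n => ENNReal.ofReal (heatF n (X.1 - Y.1) (X.2 - Y.2)) :=
  ((measurable_heatF n).comp ((measurable_const.sub measurable_fst).prodMk
    (measurable_const.sub measurable_snd))).ennreal_ofReal

lemma heatPotential_restrict_slab (n : ℕ) (X : Spc n) (T : ℝ) :
    heatPotential n (volume.restrict (univ ×ˢ Ioo (X.2 - T) X.2)) X = ENNReal.ofReal T := by
  rw [heatPotential, Measure.volume_eq_prod, ← Measure.prod_restrict, Measure.restrict_univ,
    lintegral_prod_symm _ (measurable_heatF_sub n X).aemeasurable,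
    setLIntegral_congr_fun measurableSet_Ioo fun s hs =>
      lintegral_heatF_sub n X.1 (sub_pos.2 hs.2), setLIntegral_one, Real.volume_Ioo, sub_sub_cancel]

lemma heatPotential_restrict_le (n : ℕ) (K : Set (Spc n)) (X : Spc n) {T : ℝ} (hT : 0 < T) :
    heatPotential n (volume.restrict K) X
      ≤ ENNReal.ofReal T + ENNReal.ofReal ((4 * π * T) ^ (-(n : ℝ) / 2)) * volume K := by
  set φ := fun Y : Spc n => ENNReal.ofReal (heatF n (X.1 - Y.1) (X.2 - Y.2))
  set S : Set (Spc n) := univ ×ˢ Ioo (X.2 - T) X.2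
  set c := ENNReal.ofReal ((4 * π * T) ^ (-(n : ℝ) / 2))
  have hS : MeasurableSet S := MeasurableSet.univ.prod measurableSet_Ioo
  have hφ : ∀ Y, φ Y ≤ S.indicator φ Y + c := fun Y => by
    by_cases hY : Y ∈ S
    · simp [hY]
    rw [indicator_of_notMem hY, zero_add]
    have hY : ¬(X.2 - T < Y.2 ∧ Y.2 < X.2) := by simpa [S] using hY
    rcases le_or_gt Y.2 (X.2 - T) with hY' | hY'
    · exact ENNReal.ofReal_le_ofReal (heatF_le_of_le n _ hT (by linarith))
    · simp [φ, heatF_of_nonpos n _ (sub_nonpos.2 (not_lt.1 fun h => hY ⟨hY', h⟩))]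
  calc heatPotential n (volume.restrict K) X
      ≤ ∫⁻ Y in K, S.indicator φ Y + c := lintegral_mono hφ
    _ = (∫⁻ Y in K, S.indicator φ Y) + c * volume K := by
        rw [lintegral_add_right _ measurable_const, setLIntegral_const]
    _ ≤ (∫⁻ Y, S.indicator φ Y) + c * volume K := by gcongr; exact Measure.restrict_le_self
    _ = ENNReal.ofReal T + c * volume K := by
        rw [lintegral_indicator hS, ← heatPotential_restrict_slab n X T]; rfl

lemma thermalCap_mono (n : ℕ) : Monotone (thermalCap n) := fun _ _ h =>
  sSup_le_sSup fun _ ⟨μ, hfin, hnull, hpot, hm⟩ =>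
    ⟨μ, hfin, measure_mono_null (compl_subset_compl.2 h) hnull, hpot, hm⟩

lemma le_thermalCap (n : ℕ) {K : Set (Spc n)} (μ : Measure (Spc n)) [IsFiniteMeasure μ]
    (hμK : μ Kᶜ = 0) (hμ : ∀ X, heatPotential n μ X ≤ 1) : μ univ ≤ thermalCap n K :=
  le_sSup ⟨μ, inferInstance, hμK, hμ, rfl⟩

lemma volume_div_le_thermalCap (n : ℕ) {K : Set (Spc n)} (hK : MeasurableSet K)
    (hKfin : volume K ≠ ∞) {T : ℝ} (hT : 0 < T) :
    volume K / (ENNReal.ofReal T + ENNReal.ofReal ((4 * π * T) ^ (-(n : ℝ) / 2)) * volume K)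
      ≤ thermalCap n K := by
  set c := ENNReal.ofReal T + ENNReal.ofReal ((4 * π * T) ^ (-(n : ℝ) / 2)) * volume K
  have hc0 : c ≠ 0 := (add_pos_of_pos_of_nonneg (ENNReal.ofReal_pos.2 hT) zero_le).ne'
  have hctop : c ≠ ∞ := by finiteness
  set μ := c⁻¹ • volume.restrict K
  have hμ : μ univ = volume K / c := by simp [μ, div_eq_mul_inv, mul_comm]
  have : IsFiniteMeasure μ := ⟨by rw [hμ]; exact ENNReal.div_lt_top hKfin hc0⟩
  rw [← hμ]
  refine le_thermalCap n μ (by simp [μ, Measure.restrict_apply hK.compl]) fun X => ?_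
  calc heatPotential n μ X = c⁻¹ * heatPotential n (volume.restrict K) X :=
        lintegral_smul_measure _ _
    _ ≤ c⁻¹ * c := by gcongr; exact heatPotential_restrict_le n K X hT
    _ = 1 := ENNReal.inv_mul_cancel hc0 hctop

-- choosing `T = v ^ (2 / (n + 2))` balances the two terms of the denominator
lemma div_potentialBound_at_balanced_time (n : ℕ) {v : ℝ} (hv : 0 < v) :
    v / (v ^ (2 / ((n : ℝ) + 2))
        + (4 * π * v ^ (2 / ((n : ℝ) + 2))) ^ (-(n : ℝ) / 2) * v)
      = (1 + (4 * π) ^ (-(n : ℝ) / 2))⁻¹ * v ^ ((n : ℝ) / ((n : ℝ) + 2)) := by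
  have hn2 : (n : ℝ) + 2 ≠ 0 := by positivity
  have hbal : (4 * π * v ^ (2 / ((n : ℝ) + 2))) ^ (-(n : ℝ) / 2) * v
      = (4 * π) ^ (-(n : ℝ) / 2) * v ^ (2 / ((n : ℝ) + 2)) := by
    rw [mul_rpow (by positivity) (by positivity), ← rpow_mul hv.le, mul_assoc,
      ← rpow_add_one hv.ne']
    congr 2
    field_simp
    ring
  have hsplit : v = v ^ ((n : ℝ) / ((n : ℝ) + 2)) * v ^ (2 / ((n : ℝ) + 2)) := by
    rw [← rpow_add hv, ← add_div, div_self hn2, rpow_one]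
  rw [hbal]
  nth_rewrite 1 [hsplit]
  field_simp

lemma mul_volume_rpow_le_thermalCap (n : ℕ) {K : Set (Spc n)} (hK : MeasurableSet K)
    (hK0 : volume K ≠ 0) (hKfin : volume K ≠ ∞) :
    ENNReal.ofReal (1 + (4 * π) ^ (-(n : ℝ) / 2))⁻¹ * volume K ^ ((n : ℝ) / ((n : ℝ) + 2))
      ≤ thermalCap n K := by
  obtain ⟨v, hv, hKv⟩ : ∃ v : ℝ, 0 < v ∧ volume K = ENNReal.ofReal v :=
    ⟨_, ENNReal.toReal_pos hK0 hKfin, (ENNReal.ofReal_toReal hKfin).symm⟩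
  have hT : 0 < v ^ (2 / ((n : ℝ) + 2)) := by positivity
  convert volume_div_le_thermalCap n hK hKfin hT using 1
  rw [hKv, ← ENNReal.ofReal_mul (by positivity), ← ENNReal.ofReal_add hT.le (by positivity),
    ← ENNReal.ofReal_div_of_pos (by positivity), div_potentialBound_at_balanced_time n hv,
    ENNReal.ofReal_mul (by positivity), ENNReal.ofReal_rpow_of_pos hv]

lemma mul_measure_rpow_le_of_forall_ne_top {α : Type*} [MeasurableSpace α] (μ : Measure α)
    [SigmaFinite μ] {f : Set α → ℝ≥0∞} (hf : Monotone f) {c : ℝ≥0∞} {p : ℝ} (hp : 0 < p)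
    (h : ∀ t, MeasurableSet t → μ t ≠ 0 → μ t ≠ ∞ → c * μ t ^ p ≤ f t)
    {s : Set α} (hs : MeasurableSet s) : c * μ s ^ p ≤ f s := by
  have hsup : μ s = ⨆ i, μ (s ∩ spanningSets μ i) := by
    simp_rw [← Measure.restrict_apply hs, Measure.iSup_restrict_spanningSets]
  rw [hsup, ← ENNReal.orderIsoRpow_apply p hp, OrderIso.map_iSup, ENNReal.mul_iSup]
  refine iSup_le fun i => ?_
  set t := s ∩ spanningSets μ i
  by_cases ht0 : μ t = 0
  · simp [ht0, hp]
  exact (h t (hs.inter (measurableSet_spanningSets μ i)) ht0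
    ((measure_mono inter_subset_right).trans_lt (measure_spanningSets_lt_top μ i)).ne).trans
    (hf inter_subset_left)

/-- lower bound of thermal capacity by Lebesgue measure. -/
theorem thermalCap_lower_bound (n : ℕ) (hn : 1 ≤ n) :
    ∃ N > (0 : ℝ), ∀ K : Set (Spc n), MeasurableSet K →
      ENNReal.ofReal N * volume K ^ ((n : ℝ) / ((n : ℝ) + 2)) ≤ thermalCap n K := by
  have hp : 0 < (n : ℝ) / ((n : ℝ) + 2) := by
    have : (0 : ℝ) < n := by exact_mod_cast hn
    positivity
  refine ⟨(1 + (4 * π) ^ (-(n : ℝ) / 2))⁻¹, by positivity, fun K hK => ?_⟩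
  exact mul_measure_rpow_le_of_forall_ne_top volume (thermalCap_mono n) hp
    (fun _ ht ht0 htop => mul_volume_rpow_le_thermalCap n ht ht0 htop) hK

end
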